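/- arXiv:cond-mat/0409127 — 2 statements merged into one kernel-verified Lean document; each statement's English description precedes it below -/
import Mathlib

section
/- For every finite box Λ ⊂ ℤ^d, every inverse temperature β > 0, and every Γ > 0, the quenched state of the Edwards-Anderson Hamiltonian with random field satisfies site local order at arbitrary distance: for all sites m, n ∈ Λ (independently of their distance), E[ω(σ_m σ_n)²] ≥ 1 − (2/Γ)√(2/π)·(1/β) − (1/(√(2π)·Γ³))·(1/β³), where E denotes expectation over the Gaussian disorder and ω is the random Gibbs expectation. -/
open MeasureTheory ProbabilityTheory Real Set Filter
open scoped NNReal ENNReal Topology BigOperators Classical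

noncomputable section

/-- A site of the `d`-dimensional lattice `ℤ^d`. -/
abbrev Site (d : ℕ) := Fin d → ℤ

/-- Two lattice sites are nearest neighbors, `|i - j| = 1`. -/
def IsNN {d : ℕ} (i j : Site d) : Prop := (∑ k, |i k - j k|) = 1

/-- The real value of a spin encoded as a Boolean: `true ↦ +1`, `false ↦ -1`. -/
def spinVal (b : Bool) : ℝ := if b then 1 else -1

/-- The Edwards-Anderson Hamiltonian with a random field on the finite box `Λ ⊂ ℤ^d`:
`H(σ) = -∑_{i,j ∈ Λ, |i-j|=1} J_{i,j} σ_i σ_j - ∑_{i ∈ Λ} h_i σ_i`,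
where each unordered nearest-neighbor pair is counted once (via the lexicographic order). -/
def eaH {d : ℕ} (Λ : Finset (Site d)) (J : Site d × Site d → ℝ) (h : Site d → ℝ)
    (σ : Λ → Bool) : ℝ :=
  -(∑ p : Λ × Λ,
      if IsNN (p.1 : Site d) (p.2 : Site d) ∧ toLex (p.1 : Site d) < toLex (p.2 : Site d)
      then J ((p.1 : Site d), (p.2 : Site d)) * spinVal (σ p.1) * spinVal (σ p.2)
      else 0)
  - ∑ i : Λ, h (i : Site d) * spinVal (σ i)

/-- The random Boltzmann-Gibbs expectation `ω(f)` on the box `Λ` at inverse temperature `β`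
for the couplings `J` and random fields `h`. -/
def eaGibbs {d : ℕ} (Λ : Finset (Site d)) (β : ℝ) (J : Site d × Site d → ℝ)
    (h : Site d → ℝ) (f : (Λ → Bool) → ℝ) : ℝ :=
  (∑ σ : Λ → Bool, f σ * Real.exp (-β * eaH Λ J h σ)) /
    (∑ σ : Λ → Bool, Real.exp (-β * eaH Λ J h σ))



def loQ (t : ℝ) : ℝ := 4 * Real.exp t / (1 + Real.exp t) ^ 2

lemma loQ_nonneg (t : ℝ) : 0 ≤ loQ t := by
  unfold loQ; positivity

lemma loQ_hasDerivAt (a c : ℝ) (ha : a ≠ 0) (x : ℝ) :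
    HasDerivAt (fun y => -4 / (a * (1 + Real.exp (a * y + c)))) (loQ (a * x + c)) x := by
  have h1 : HasDerivAt (fun y : ℝ => a * y + c) a x := by
    simpa using ((hasDerivAt_id x).const_mul a).add_const c
  have h2 : HasDerivAt (fun y => Real.exp (a * y + c)) (Real.exp (a * x + c) * a) x :=
    (Real.hasDerivAt_exp _).comp x h1
  have h3 : HasDerivAt (fun y => a * (1 + Real.exp (a * y + c)))
      (a * (Real.exp (a * x + c) * a)) x := (h2.const_add 1).const_mul a
  have hne : a * (1 + Real.exp (a * x + c)) ≠ 0 := by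
    have := Real.exp_pos (a * x + c); intro hc
    rcases mul_eq_zero.mp hc with h | h
    · exact ha h
    · nlinarith
  have h4 := (h3.inv hne).const_mul (-4 : ℝ)
  have : (-4 : ℝ) * (-(a * (Real.exp (a * x + c) * a)) / (a * (1 + Real.exp (a * x + c))) ^ 2)
      = loQ (a * x + c) := by
    unfold loQ
    have hE := Real.exp_pos (a * x + c)
    field_simp
  rw [this] at h4
  simpa [div_eq_mul_inv] using h4




lemma loQ_le_exp_neg (t : ℝ) : loQ t ≤ 4 * Real.exp (-t) := by
  unfold loQ
  have h := Real.exp_pos t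
  have h1 : Real.exp t * (Real.exp t)⁻¹ = 1 := mul_inv_cancel₀ (ne_of_gt h)
  rw [Real.exp_neg, div_le_iff₀ (by positivity)]
  nlinarith [inv_pos.mpr h, mul_pos h (inv_pos.mpr h)]

lemma loQ_le_exp (t : ℝ) : loQ t ≤ 4 * Real.exp t := by
  unfold loQ
  have h := Real.exp_pos t
  rw [div_le_iff₀ (by positivity)]
  nlinarith [mul_pos h h, mul_pos (mul_pos h h) h]

lemma loQ_le_one (t : ℝ) : loQ t ≤ 1 := by
  unfold loQ
  have h := Real.exp_pos t
  rw [div_le_one (by positivity)]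
  nlinarith [sq_nonneg (1 - Real.exp t)]



lemma loQ_continuous : Continuous loQ := by
  unfold loQ
  apply Continuous.div (by continuity) (by continuity)
  intro t
  have := Real.exp_pos t
  positivity

set_option maxHeartbeats 1000000 in
lemma integrableOn_exp_affine_Iic (a c t : ℝ) (ha : 0 < a) :
    IntegrableOn (fun x : ℝ => Real.exp (a * x + c)) (Iic t) := by
  have h1 : IntegrableOn (fun x : ℝ => Real.exp c * Real.exp (-a * x)) (Ioi (-t)) :=
    (exp_neg_integrableOn_Ioi (-t) ha).const_mul _
  have h2 : IntegrableOn (fun x : ℝ => Real.exp c * Real.exp (-a * (-x))) (Neg.neg ⁻¹' (Ioi (-t))) :=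
    (MeasurePreserving.integrableOn_comp_preimage (Measure.measurePreserving_neg _)
      (Homeomorph.neg ℝ).measurableEmbedding).2 h1
  have hset : (Neg.neg ⁻¹' (Ioi (-t)) : Set ℝ) = Iio t := by
    ext x; simp [neg_lt]
  rw [hset] at h2
  have h3 : IntegrableOn (fun x : ℝ => Real.exp (a * x + c)) (Iio t) := by
    refine h2.congr_fun (fun x _ => ?_) measurableSet_Iio
    dsimp only; rw [← Real.exp_add]; congr 1; ring
  rwa [← integrableOn_Iic_iff_integrableOn_Iio] at h3

lemma loQ_comp_integrable (a c : ℝ) (ha : 0 < a) :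
    Integrable (fun x : ℝ => loQ (a * x + c)) := by
  have hmeas : Measurable fun x : ℝ => loQ (a * x + c) :=
    loQ_continuous.measurable.comp ((measurable_id.const_mul a).add_const c)
  rw [← integrableOn_univ, ← Set.Iic_union_Ioi (a := (0:ℝ))]
  apply IntegrableOn.union
  · apply Integrable.mono' ((integrableOn_exp_affine_Iic a c 0 ha).const_mul 4)
      hmeas.aestronglyMeasurable
    filter_upwards with x
    rw [Real.norm_of_nonneg (loQ_nonneg _)]
    exact loQ_le_exp _
  · apply Integrable.mono' (((exp_neg_integrableOn_Ioi (0:ℝ) ha).const_mul (4 * Real.exp (-c))))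
      hmeas.aestronglyMeasurable
    filter_upwards with x
    rw [Real.norm_of_nonneg (loQ_nonneg _)]
    calc loQ (a * x + c) ≤ 4 * Real.exp (-(a * x + c)) := loQ_le_exp_neg _
    _ = 4 * Real.exp (-c) * Real.exp (-a * x) := by
        rw [mul_assoc, ← Real.exp_add]; congr 2; ring

lemma loQ_integral (a c : ℝ) (ha : 0 < a) :
    ∫ x : ℝ, loQ (a * x + c) = 4 / a := by
  have htop : Tendsto (fun y => -4 / (a * (1 + Real.exp (a * y + c)))) atTop (𝓝 0) := by
    apply Tendsto.div_atTop (tendsto_const_nhds)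
    apply Tendsto.const_mul_atTop ha
    exact tendsto_atTop_add_const_left _ 1
      (Real.tendsto_exp_atTop.comp (tendsto_atTop_add_const_right _ c
        (tendsto_id.const_mul_atTop ha)))
  have hbot : Tendsto (fun y => -4 / (a * (1 + Real.exp (a * y + c)))) atBot (𝓝 (-4 / a)) := by
    have h1 : Tendsto (fun y : ℝ => a * y + c) atBot atBot :=
      tendsto_atBot_add_const_right _ c (tendsto_id.const_mul_atBot ha)
    have h2 : Tendsto (fun y => Real.exp (a * y + c)) atBot (𝓝 0) :=
      Real.tendsto_exp_atBot.comp h1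
    have h3 : Tendsto (fun y => a * (1 + Real.exp (a * y + c))) atBot (𝓝 (a * (1 + 0))) :=
      (h2.const_add 1).const_mul a
    have h4 : Tendsto (fun y => -4 / (a * (1 + Real.exp (a * y + c)))) atBot
        (𝓝 (-4 / (a * (1 + 0)))) := tendsto_const_nhds.div h3 (by simp [ha.ne'])
    simpa using h4
  have := MeasureTheory.integral_of_hasDerivAt_of_tendsto
    (fun x => loQ_hasDerivAt a c ha.ne' x) (loQ_comp_integrable a c ha) hbot htop
  rw [this]; ring

lemma loQ_gauss_bound (Γ β c : ℝ) (hΓ : 0 < Γ) (hβ : 0 < β) :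
    ∫ x, loQ (2 * β * x + c) ∂(gaussianReal 0 ⟨Γ^2, sq_nonneg Γ⟩) ≤
      2 / (Real.sqrt (2 * π) * Γ * β) := by
  have hv : (⟨Γ^2, sq_nonneg Γ⟩ : ℝ≥0) ≠ 0 := by
    intro hc
    exact (pow_pos hΓ 2).ne' (congrArg (fun z : ℝ≥0 => (z : ℝ)) hc)
  rw [gaussianReal_of_var_ne_zero 0 hv]
  have hpdf : (gaussianPDF 0 ⟨Γ^2, sq_nonneg Γ⟩)
      = fun x => ((Real.toNNReal (gaussianPDFReal 0 ⟨Γ^2, sq_nonneg Γ⟩ x) : ℝ≥0) : ℝ≥0∞) := by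
    rfl
  rw [hpdf]; refine (integral_withDensity_eq_integral_smul
    ((measurable_gaussianPDFReal _ _).real_toNNReal) _).trans_le ?_
  have hK : ∀ x : ℝ, gaussianPDFReal 0 ⟨Γ^2, sq_nonneg Γ⟩ x ≤ (Real.sqrt (2*π) * Γ)⁻¹ := by
    intro x
    unfold gaussianPDFReal
    change (Real.sqrt (2*π*Γ^2))⁻¹ * Real.exp (-(x - 0)^2 / (2 * Γ^2)) ≤ _
    rw [Real.sqrt_mul (by positivity) (Γ^2), Real.sqrt_sq hΓ.le]
    calc (Real.sqrt (2*π) * Γ)⁻¹ * Real.exp (-(x - 0)^2 / (2 * Γ^2))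
        ≤ (Real.sqrt (2*π) * Γ)⁻¹ * 1 := by
          apply mul_le_mul_of_nonneg_left _ (by positivity)
          rw [Real.exp_le_one_iff]
          exact div_nonpos_of_nonpos_of_nonneg (neg_nonpos.mpr (by positivity)) (by positivity)
      _ = (Real.sqrt (2*π) * Γ)⁻¹ := mul_one _
  have h2β : (0:ℝ) < 2 * β := by linarith
  calc ∫ x, (Real.toNNReal (gaussianPDFReal 0 ⟨Γ^2, sq_nonneg Γ⟩ x)) • loQ (2*β*x + c)
      ≤ ∫ x, (Real.sqrt (2*π) * Γ)⁻¹ * loQ (2*β*x + c) := by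
        apply integral_mono_of_nonneg
        · filter_upwards with x
          exact smul_nonneg (by positivity) (loQ_nonneg _)
        · exact (loQ_comp_integrable _ c h2β).const_mul _
        · filter_upwards with x
          have : (Real.toNNReal (gaussianPDFReal 0 ⟨Γ^2, sq_nonneg Γ⟩ x)) • loQ (2*β*x + c)
              = gaussianPDFReal 0 ⟨Γ^2, sq_nonneg Γ⟩ x * loQ (2*β*x + c) := by
            simp [NNReal.smul_def, Real.coe_toNNReal _ (gaussianPDFReal_nonneg _ _ _)]
            exact Or.inl (gaussianPDFReal_nonneg _ _ _)
          rw [this]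
          exact mul_le_mul_of_nonneg_right (hK x) (loQ_nonneg _)
    _ = (Real.sqrt (2*π) * Γ)⁻¹ * (4 / (2*β)) := by
        rw [integral_const_mul, loQ_integral _ c h2β]
    _ = 2 / (Real.sqrt (2 * π) * Γ * β) := by
        have : Real.sqrt (2*π) > 0 := Real.sqrt_pos.mpr (by positivity)
        field_simp
        ring


variable {d : ℕ} (Λ : Finset (Site d)) (β : ℝ)

lemma spinVal_cases (b : Bool) : spinVal b = 1 ∨ spinVal b = -1 := by
  cases b <;> simp [spinVal]

lemma eaZ_pos (J : Site d × Site d → ℝ) (h : Site d → ℝ) :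
    0 < ∑ σ : Λ → Bool, Real.exp (-β * eaH Λ J h σ) :=
  Finset.sum_pos (fun σ _ => Real.exp_pos _) Finset.univ_nonempty

/-- replica inequality -/
lemma gibbs_pair (J : Site d × Site d → ℝ) (h : Site d → ℝ) (u v : (Λ → Bool) → ℝ)
    (hu : ∀ σ, u σ = 1 ∨ u σ = -1) (hv : ∀ σ, v σ = 1 ∨ v σ = -1) :
    eaGibbs Λ β J h u ^ 2 + eaGibbs Λ β J h v ^ 2
      ≤ 1 + eaGibbs Λ β J h (fun σ => u σ * v σ) ^ 2 := by
  set w : (Λ → Bool) → ℝ := fun σ => Real.exp (-β * eaH Λ J h σ) with hw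
  have hwpos : ∀ σ, 0 < w σ := fun σ => Real.exp_pos _
  set Z : ℝ := ∑ σ : Λ → Bool, w σ with hZ
  have hZpos : 0 < Z := eaZ_pos Λ β J h
  have key : (∑ σ : Λ → Bool, u σ * w σ)^2 + (∑ σ : Λ → Bool, v σ * w σ)^2
      ≤ Z^2 + (∑ σ : Λ → Bool, (u σ * v σ) * w σ)^2 := by
    have e1 : Z^2 = ∑ σ : Λ → Bool, ∑ τ : Λ → Bool, w σ * w τ := by
      rw [sq, hZ, Finset.sum_mul_sum]
    have e2 : (∑ σ : Λ → Bool, u σ * w σ)^2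
        = ∑ σ : Λ → Bool, ∑ τ : Λ → Bool, (u σ * w σ) * (u τ * w τ) := by
      rw [sq, Finset.sum_mul_sum]
    have e3 : (∑ σ : Λ → Bool, v σ * w σ)^2
        = ∑ σ : Λ → Bool, ∑ τ : Λ → Bool, (v σ * w σ) * (v τ * w τ) := by
      rw [sq, Finset.sum_mul_sum]
    have e4 : (∑ σ : Λ → Bool, (u σ * v σ) * w σ)^2
        = ∑ σ : Λ → Bool, ∑ τ : Λ → Bool, ((u σ * v σ) * w σ) * ((u τ * v τ) * w τ) := by
      rw [sq, Finset.sum_mul_sum]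
    have expand : Z^2 + (∑ σ : Λ → Bool, (u σ * v σ) * w σ)^2
        - ((∑ σ : Λ → Bool, u σ * w σ)^2 + (∑ σ : Λ → Bool, v σ * w σ)^2)
        = ∑ σ : Λ → Bool, ∑ τ : Λ → Bool,
            w σ * w τ * ((1 - u σ * u τ) * (1 - v σ * v τ)) := by
      rw [e1, e2, e3, e4, ← Finset.sum_add_distrib, ← Finset.sum_add_distrib,
        ← Finset.sum_sub_distrib]
      refine Finset.sum_congr rfl fun σ _ => ?_
      rw [← Finset.sum_add_distrib, ← Finset.sum_add_distrib, ← Finset.sum_sub_distrib]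
      refine Finset.sum_congr rfl fun τ _ => ?_
      ring
    have pos : 0 ≤ ∑ σ : Λ → Bool, ∑ τ : Λ → Bool,
        w σ * w τ * ((1 - u σ * u τ) * (1 - v σ * v τ)) := by
      refine Finset.sum_nonneg fun σ _ => Finset.sum_nonneg fun τ _ => ?_
      have h1 : 0 ≤ 1 - u σ * u τ := by
        rcases hu σ with h | h <;> rcases hu τ with h' | h' <;> rw [h, h'] <;> norm_num
      have h2 : 0 ≤ 1 - v σ * v τ := by
        rcases hv σ with h | h <;> rcases hv τ with h' | h' <;> rw [h, h'] <;> norm_num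
      exact mul_nonneg (mul_nonneg (hwpos σ).le (hwpos τ).le) (mul_nonneg h1 h2)
    linarith [expand ▸ pos]
  have hZ2 : (0:ℝ) < Z^2 := pow_pos hZpos 2
  have hG : ∀ g : (Λ → Bool) → ℝ, eaGibbs Λ β J h g = (∑ σ : Λ → Bool, g σ * w σ) / Z := by
    intro g; rfl
  rw [hG, hG, hG, div_pow, div_pow, div_pow, ← sub_nonneg]
  have hrw : 1 + (∑ σ : Λ → Bool, (u σ * v σ) * w σ)^2 / Z^2
      - ((∑ σ : Λ → Bool, u σ * w σ)^2 / Z^2 + (∑ σ : Λ → Bool, v σ * w σ)^2 / Z^2)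
      = (Z^2 + (∑ σ : Λ → Bool, (u σ * v σ) * w σ)^2
        - ((∑ σ : Λ → Bool, u σ * w σ)^2 + (∑ σ : Λ → Bool, v σ * w σ)^2)) / Z^2 := by
    field_simp
  rw [hrw]
  exact div_nonneg (by linarith) hZ2.le

lemma eaH_update (J : Site d × Site d → ℝ) (h : Site d → ℝ) (i : Site d) (hi : i ∈ Λ)
    (σ : Λ → Bool) :
    eaH Λ J h σ = eaH Λ J (Function.update h i 0) σ - h i * spinVal (σ ⟨i, hi⟩) := by
  unfold eaH
  have hfield : ∑ j : Λ, h (j : Site d) * spinVal (σ j)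
      = (∑ j : Λ, Function.update h i 0 (j : Site d) * spinVal (σ j))
        + h i * spinVal (σ ⟨i, hi⟩) := by
    rw [← Finset.sum_erase_add _ _ (Finset.mem_univ (⟨i, hi⟩ : {x // x ∈ Λ})),
      ← Finset.sum_erase_add _ (fun j : {x // x ∈ Λ} =>
        Function.update h i 0 (j : Site d) * spinVal (σ j))
        (Finset.mem_univ (⟨i, hi⟩ : {x // x ∈ Λ}))]
    have h1 : ∀ j ∈ Finset.univ.erase (⟨i, hi⟩ : {x // x ∈ Λ}),
        h (j : Site d) * spinVal (σ j)
          = Function.update h i 0 (j : Site d) * spinVal (σ j) := by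
      intro j hj
      have hne : (j : Site d) ≠ i := by
        intro hc
        exact (Finset.mem_erase.mp hj).1 (Subtype.ext hc)
      rw [Function.update_of_ne hne]
    rw [Finset.sum_congr rfl h1, Function.update_self]
    ring
  rw [hfield]; ring

/-- partition function decomposition at site i -/
lemma sum_decomp (J : Site d × Site d → ℝ) (h : Site d → ℝ) (i : Site d) (hi : i ∈ Λ)
    (g : (Λ → Bool) → ℝ) :
    ∑ σ : Λ → Bool, g σ * Real.exp (-β * eaH Λ J h σ)
      = (∑ σ : (Λ → Bool) with σ ⟨i, hi⟩ = true,
          g σ * Real.exp (-β * eaH Λ J (Function.update h i 0) σ)) * Real.exp (β * h i)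
      + (∑ σ : (Λ → Bool) with σ ⟨i, hi⟩ = false,
          g σ * Real.exp (-β * eaH Λ J (Function.update h i 0) σ)) * Real.exp (-(β * h i)) := by
  rw [← Finset.sum_filter_add_sum_filter_not Finset.univ
    (fun σ : Λ → Bool => σ ⟨i, hi⟩ = true)]
  congr 1
  · rw [Finset.sum_mul]
    refine Finset.sum_congr rfl fun σ hσ => ?_
    have hσi : σ ⟨i, hi⟩ = true := (Finset.mem_filter.mp hσ).2
    rw [eaH_update Λ J h i hi σ, hσi]
    rw [show -β * (eaH Λ J (Function.update h i 0) σ - h i * spinVal true)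
        = (-β * eaH Λ J (Function.update h i 0) σ) + β * h i by simp [spinVal]; ring,
      Real.exp_add]
    ring
  · rw [Finset.sum_mul]
    have hfil : Finset.univ.filter (fun σ : Λ → Bool => ¬ σ ⟨i, hi⟩ = true)
        = Finset.univ.filter (fun σ : Λ → Bool => σ ⟨i, hi⟩ = false) := by
      apply Finset.filter_congr
      intro σ _
      simp [Bool.not_eq_true]
    rw [hfil]
    refine Finset.sum_congr rfl fun σ hσ => ?_
    have hσi : σ ⟨i, hi⟩ = false := (Finset.mem_filter.mp hσ).2
    rw [eaH_update Λ J h i hi σ, hσi]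
    rw [show -β * (eaH Λ J (Function.update h i 0) σ - h i * spinVal false)
        = (-β * eaH Λ J (Function.update h i 0) σ) + -(β * h i) by simp [spinVal]; ring,
      Real.exp_add]
    ring

lemma part_pos (J : Site d × Site d → ℝ) (h : Site d → ℝ) (i : Site d) (hi : i ∈ Λ) (b : Bool) :
    0 < ∑ σ : (Λ → Bool) with σ ⟨i, hi⟩ = b, Real.exp (-β * eaH Λ J h σ) := by
  apply Finset.sum_pos (fun σ _ => Real.exp_pos _)
  exact ⟨fun _ => b, Finset.mem_filter.mpr ⟨Finset.mem_univ _, rfl⟩⟩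

lemma one_sub_ratio_sq (A B x : ℝ) (hA : 0 < A) (hB : 0 < B) :
    1 - ((A * Real.exp x - B * Real.exp (-x)) / (A * Real.exp x + B * Real.exp (-x)))^2
      = loQ (2 * x + Real.log (A / B)) := by
  have hE := Real.exp_pos x
  have hden : 0 < A * Real.exp x + B * Real.exp (-x) := by positivity
  unfold loQ
  rw [Real.exp_add, Real.exp_log (div_pos hA hB),
    show (2:ℝ) * x = x + x by ring, Real.exp_add, Real.exp_neg]
  have h1 : 0 < 1 + Real.exp x * Real.exp x * (A / B) := by positivity
  field_simp
  ring

/-- the key pointwise identity at a site -/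
lemma site_identity (J : Site d × Site d → ℝ) (h : Site d → ℝ) (i : Site d) (hi : i ∈ Λ) :
    1 - eaGibbs Λ β (fun p => J p) h (fun σ => spinVal (σ ⟨i, hi⟩)) ^ 2
      = loQ (2 * (β * h i) + Real.log
          ((∑ σ : (Λ → Bool) with σ ⟨i, hi⟩ = true,
              Real.exp (-β * eaH Λ J (Function.update h i 0) σ)) /
           (∑ σ : (Λ → Bool) with σ ⟨i, hi⟩ = false,
              Real.exp (-β * eaH Λ J (Function.update h i 0) σ)))) := by
  set A := ∑ σ : (Λ → Bool) with σ ⟨i, hi⟩ = true,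
      Real.exp (-β * eaH Λ J (Function.update h i 0) σ) with hA
  set B := ∑ σ : (Λ → Bool) with σ ⟨i, hi⟩ = false,
      Real.exp (-β * eaH Λ J (Function.update h i 0) σ) with hB
  have hApos : 0 < A := part_pos Λ β J (Function.update h i 0) i hi true
  have hBpos : 0 < B := part_pos Λ β J (Function.update h i 0) i hi false
  have hnum : ∑ σ : Λ → Bool, spinVal (σ ⟨i, hi⟩) * Real.exp (-β * eaH Λ J h σ)
      = A * Real.exp (β * h i) - B * Real.exp (-(β * h i)) := by
    rw [sum_decomp Λ β J h i hi (fun σ => spinVal (σ ⟨i, hi⟩))]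
    have e1 : ∑ σ : (Λ → Bool) with σ ⟨i, hi⟩ = true,
        spinVal (σ ⟨i, hi⟩) * Real.exp (-β * eaH Λ J (Function.update h i 0) σ) = A := by
      rw [hA]
      refine Finset.sum_congr rfl fun σ hσ => ?_
      rw [(Finset.mem_filter.mp hσ).2]
      simp [spinVal]
    have e2 : ∑ σ : (Λ → Bool) with σ ⟨i, hi⟩ = false,
        spinVal (σ ⟨i, hi⟩) * Real.exp (-β * eaH Λ J (Function.update h i 0) σ) = -B := by
      rw [hB, ← Finset.sum_neg_distrib]
      refine Finset.sum_congr rfl fun σ hσ => ?_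
      rw [(Finset.mem_filter.mp hσ).2]
      simp [spinVal]
    rw [e1, e2]
    ring
  have hden : ∑ σ : Λ → Bool, Real.exp (-β * eaH Λ J h σ)
      = A * Real.exp (β * h i) + B * Real.exp (-(β * h i)) := by
    have := sum_decomp Λ β J h i hi (fun _ => (1:ℝ))
    simpa only [one_mul] using this
  have hG : eaGibbs Λ β (fun p => J p) h (fun σ => spinVal (σ ⟨i, hi⟩))
      = (A * Real.exp (β * h i) - B * Real.exp (-(β * h i)))
        / (A * Real.exp (β * h i) + B * Real.exp (-(β * h i))) := by
    unfold eaGibbs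
    rw [← hnum, ← hden]
  rw [hG, one_sub_ratio_sq _ _ _ hApos hBpos]


/-- The disorder of the Edwards-Anderson model with a random field:
the couplings `J_{i,j}` over nearest-neighbor pairs are i.i.d. centered Gaussians with
variance `Δ²`, the fields `h_i` are i.i.d. centered Gaussians with variance `Γ²`, and
the whole family (couplings together with fields) is independent. -/
structure IsEADisorder {Ω : Type*} [MeasurableSpace Ω] (μ : Measure Ω) {d : ℕ}
    (J : Ω → Site d × Site d → ℝ) (h : Ω → Site d → ℝ) (Δ Γ : ℝ) : Prop where
  isProb : IsProbabilityMeasure μ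
  measJ : ∀ p : Site d × Site d, Measurable fun ω => J ω p
  meash : ∀ i : Site d, Measurable fun ω => h ω i
  lawJ : ∀ p : Site d × Site d, IsNN p.1 p.2 →
    Measure.map (fun ω => J ω p) μ = gaussianReal 0 ⟨Δ ^ 2, sq_nonneg Δ⟩
  lawh : ∀ i : Site d,
    Measure.map (fun ω => h ω i) μ = gaussianReal 0 ⟨Γ ^ 2, sq_nonneg Γ⟩
  indep : iIndepFun (m := fun _ => Real.measurableSpace)
    (Sum.elim (fun (p : {p : Site d × Site d // IsNN p.1 p.2}) ω => J ω (p : Site d × Site d))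
              (fun (i : Site d) ω => h ω i)) μ



section Meas
variable {d : ℕ} (Λ : Finset (Site d)) (β : ℝ)

lemma measurable_eaH {Ω' : Type*} [MeasurableSpace Ω'] {Jf : Ω' → Site d × Site d → ℝ}
    {hf : Ω' → Site d → ℝ} (mJ : ∀ p, Measurable fun ω => Jf ω p)
    (mh : ∀ j, Measurable fun ω => hf ω j) (σ : Λ → Bool) :
    Measurable fun ω => eaH Λ (Jf ω) (hf ω) σ := by
  unfold eaH
  apply Measurable.sub
  · apply Measurable.neg
    apply Finset.measurable_sum
    intro p _
    by_cases hc : IsNN (p.1 : Site d) (p.2 : Site d) ∧ toLex (p.1 : Site d) < toLex (p.2 : Site d)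
    · simp only [if_pos hc]
      exact ((mJ _).mul_const _).mul_const _
    · simp only [if_neg hc]; exact measurable_const
  · apply Finset.measurable_sum
    intro j _
    exact (mh _).mul_const _

lemma measurable_eaGibbs {Ω' : Type*} [MeasurableSpace Ω'] {Jf : Ω' → Site d × Site d → ℝ}
    {hf : Ω' → Site d → ℝ} (mJ : ∀ p, Measurable fun ω => Jf ω p)
    (mh : ∀ j, Measurable fun ω => hf ω j) (f : (Λ → Bool) → ℝ) :
    Measurable fun ω => eaGibbs Λ β (Jf ω) (hf ω) f := by
  unfold eaGibbs
  apply Measurable.div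
  · exact Finset.measurable_sum _ fun σ _ =>
      (((measurable_eaH Λ mJ mh σ).const_mul (-β)).exp.const_mul (f σ))
  · exact Finset.measurable_sum _ fun σ _ =>
      (((measurable_eaH Λ mJ mh σ).const_mul (-β)).exp)

lemma abs_eaGibbs_le_one (J : Site d × Site d → ℝ) (h : Site d → ℝ) (u : (Λ → Bool) → ℝ)
    (hu : ∀ σ, u σ = 1 ∨ u σ = -1) : |eaGibbs Λ β J h u| ≤ 1 := by
  have hZpos := eaZ_pos Λ β J h
  unfold eaGibbs
  rw [abs_div, abs_of_pos hZpos, div_le_one hZpos]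
  calc |∑ σ : Λ → Bool, u σ * Real.exp (-β * eaH Λ J h σ)|
      ≤ ∑ σ : Λ → Bool, |u σ * Real.exp (-β * eaH Λ J h σ)| := Finset.abs_sum_le_sum_abs _ _
    _ = ∑ σ : Λ → Bool, Real.exp (-β * eaH Λ J h σ) := by
        refine Finset.sum_congr rfl fun σ _ => ?_
        rw [abs_mul, abs_of_pos (Real.exp_pos _)]
        rcases hu σ with h' | h' <;> rw [h'] <;> norm_num

end Meas

/-- The per-site quenched bound. -/
lemma site_integral_bound {d : ℕ} (Λ : Finset (Site d))
    {Ω : Type*} [MeasurableSpace Ω] (μ : Measure Ω)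
    (J : Ω → Site d × Site d → ℝ) (h : Ω → Site d → ℝ)
    (Δ Γ : ℝ) (hΓ : 0 < Γ) (hdis : IsEADisorder μ J h Δ Γ)
    (β : ℝ) (hβ : 0 < β) (i : Site d) (hi : i ∈ Λ) :
    ∫ ω, (1 - eaGibbs Λ β (J ω) (h ω) (fun σ => spinVal (σ ⟨i, hi⟩)) ^ 2) ∂μ
      ≤ 2 / (Real.sqrt (2 * π) * Γ * β) := by
  haveI : IsProbabilityMeasure μ := hdis.isProb
  set ι := Sum {p : Site d × Site d // IsNN p.1 p.2} (Site d) with hι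
  set X : ι → Ω → ℝ := Sum.elim
      (fun (p : {p : Site d × Site d // IsNN p.1 p.2}) ω => J ω (p : Site d × Site d))
      (fun (j : Site d) ω => h ω j) with hX
  have hXmeas : ∀ k : ι, Measurable (X k) := by
    rintro (p | j)
    · exact hdis.measJ _
    · exact hdis.meash _
  set PF : Finset (Site d × Site d) :=
    (Λ ×ˢ Λ).filter (fun p => IsNN p.1 p.2 ∧ toLex p.1 < toLex p.2) with hPF
  set T : Finset ι :=
    (PF.attach.image (fun p => Sum.inl ⟨p.1, ((Finset.mem_filter.mp p.2).2).1⟩))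
      ∪ ((Λ.erase i).image Sum.inr) with hT
  set S : Finset ι := {Sum.inr i} with hS
  have hinrT : ∀ j : Site d, (Sum.inr j : ι) ∈ T ↔ j ∈ Λ.erase i := by
    intro j
    constructor
    · intro hj
      rcases Finset.mem_union.mp hj with hj | hj
      · exfalso
        rcases Finset.mem_image.mp hj with ⟨p, _, hp⟩
        exact Sum.inl_ne_inr hp
      · rcases Finset.mem_image.mp hj with ⟨a, ha, hp⟩
        rwa [← Sum.inr_injective hp]
    · intro hj
      exact Finset.mem_union_right _ (Finset.mem_image_of_mem _ hj)
  have hST : Disjoint S T := by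
    rw [Finset.disjoint_left]
    intro k hk hkT
    rw [hS, Finset.mem_singleton] at hk
    subst hk
    have := (hinrT i).mp hkT
    exact (Finset.notMem_erase i Λ) this
  have hpairT : ∀ (a b : Site d), a ∈ Λ → b ∈ Λ → ∀ (hnn : IsNN a b), toLex a < toLex b →
      (Sum.inl ⟨(a, b), hnn⟩ : ι) ∈ T := by
    intro a b ha hb hnn hlt
    apply Finset.mem_union_left
    have hmem : ((a, b) : Site d × Site d) ∈ PF := by
      rw [hPF, Finset.mem_filter]
      exact ⟨Finset.mem_product.mpr ⟨ha, hb⟩, hnn, hlt⟩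
    refine Finset.mem_image.mpr ⟨⟨(a, b), hmem⟩, Finset.mem_attach _ _, rfl⟩
  set R : Ω → ({x // x ∈ T} → ℝ) := fun ω t => X (t : ι) ω with hR
  have hRmeas : Measurable R := measurable_pi_lambda _ fun t => hXmeas _
  have hIndep : IndepFun (fun ω => h ω i) R μ := by
    have h0 := hdis.indep.indepFun_finset S T hST hXmeas
    have h1 := h0.comp (measurable_pi_apply
      (⟨Sum.inr i, by rw [hS]; exact Finset.mem_singleton_self _⟩ : {x // x ∈ S}))
      measurable_id
    exact h1
  -- reconstruction maps
  set Jv : ({x // x ∈ T} → ℝ) → Site d × Site d → ℝ := fun v p =>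
    if hp : IsNN p.1 p.2 then
      (if hm : (Sum.inl ⟨p, hp⟩ : ι) ∈ T then v ⟨_, hm⟩ else 0) else 0 with hJv
  set hv : ({x // x ∈ T} → ℝ) → Site d → ℝ := fun v j =>
    if hm : (Sum.inr j : ι) ∈ T then v ⟨_, hm⟩ else 0 with hhv
  have hJvmeas : ∀ p, Measurable fun v : ({x // x ∈ T} → ℝ) => Jv v p := by
    intro p
    rw [hJv]
    by_cases h1 : IsNN p.1 p.2
    · simp only [dif_pos h1]
      by_cases h2 : (Sum.inl ⟨p, h1⟩ : ι) ∈ T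
      · simp only [dif_pos h2]; exact measurable_pi_apply _
      · simp only [dif_neg h2]; exact measurable_const
    · simp only [dif_neg h1]; exact measurable_const
  have hhvmeas : ∀ j, Measurable fun v : ({x // x ∈ T} → ℝ) => hv v j := by
    intro j
    rw [hhv]
    by_cases h2 : (Sum.inr j : ι) ∈ T
    · simp only [dif_pos h2]; exact measurable_pi_apply _
    · simp only [dif_neg h2]; exact measurable_const
  have hEA : ∀ (ω : Ω) (σ : Λ → Bool),
      eaH Λ (Jv (R ω)) (hv (R ω)) σ = eaH Λ (J ω) (Function.update (h ω) i 0) σ := by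
    intro ω σ
    unfold eaH
    congr 1
    · congr 1
      refine Finset.sum_congr rfl fun p _ => ?_
      by_cases hc : IsNN (p.1 : Site d) (p.2 : Site d) ∧
          toLex (p.1 : Site d) < toLex (p.2 : Site d)
      · rw [if_pos hc, if_pos hc]
        have hmem : (Sum.inl ⟨((p.1 : Site d), (p.2 : Site d)), hc.1⟩ : ι) ∈ T :=
          hpairT _ _ (p.1 : {x // x ∈ Λ}).2 (p.2 : {x // x ∈ Λ}).2 hc.1 hc.2
        have hval : Jv (R ω) ((p.1 : Site d), (p.2 : Site d))
            = J ω ((p.1 : Site d), (p.2 : Site d)) := by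
          rw [hJv]
          simp only [dif_pos hc.1, dif_pos hmem]
          rfl
        rw [hval]
      · rw [if_neg hc, if_neg hc]
    · refine Finset.sum_congr rfl fun j _ => ?_
      congr 1
      by_cases hj : (j : Site d) = i
      · have h1 : hv (R ω) (j : Site d) = 0 := by
          rw [hhv]
          have : ¬ ((Sum.inr (j : Site d) : ι) ∈ T) := by
            rw [hj]
            intro hc
            exact (Finset.notMem_erase i Λ) ((hinrT i).mp hc)
          simp only [dif_neg this]
        rw [h1, hj, Function.update_self]
      · have hmem : (Sum.inr (j : Site d) : ι) ∈ T :=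
          (hinrT _).mpr (Finset.mem_erase.mpr ⟨hj, j.2⟩)
        have h1 : hv (R ω) (j : Site d) = h ω (j : Site d) := by
          rw [hhv]; simp only [dif_pos hmem]; rfl
        rw [h1, Function.update_of_ne hj]
  -- the function g on ℝ × V
  set A' : ({x // x ∈ T} → ℝ) → ℝ := fun v => ∑ σ : (Λ → Bool) with σ ⟨i, hi⟩ = true,
      Real.exp (-β * eaH Λ (Jv v) (hv v) σ) with hA'
  set B' : ({x // x ∈ T} → ℝ) → ℝ := fun v => ∑ σ : (Λ → Bool) with σ ⟨i, hi⟩ = false,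
      Real.exp (-β * eaH Λ (Jv v) (hv v) σ) with hB'
  set g : ℝ × ({x // x ∈ T} → ℝ) → ℝ := fun z => loQ (2 * β * z.1 + Real.log (A' z.2 / B' z.2)) with hg
  have hA'meas : Measurable A' :=
    Finset.measurable_sum _ fun σ _ =>
      ((measurable_eaH Λ hJvmeas hhvmeas σ).const_mul (-β)).exp
  have hB'meas : Measurable B' :=
    Finset.measurable_sum _ fun σ _ =>
      ((measurable_eaH Λ hJvmeas hhvmeas σ).const_mul (-β)).exp
  have hgmeas : Measurable g := by
    apply loQ_continuous.measurable.comp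
    apply Measurable.add
    · exact (measurable_fst.const_mul _)
    · exact ((hA'meas.comp measurable_snd).div (hB'meas.comp measurable_snd)).log
  have hpoint : ∀ ω : Ω,
      1 - eaGibbs Λ β (J ω) (h ω) (fun σ => spinVal (σ ⟨i, hi⟩)) ^ 2 = g (h ω i, R ω) := by
    intro ω
    have hAeq : A' (R ω) = ∑ σ : (Λ → Bool) with σ ⟨i, hi⟩ = true,
        Real.exp (-β * eaH Λ (J ω) (Function.update (h ω) i 0) σ) := by
      rw [hA']
      exact Finset.sum_congr rfl fun σ _ => by rw [hEA ω σ]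
    have hBeq : B' (R ω) = ∑ σ : (Λ → Bool) with σ ⟨i, hi⟩ = false,
        Real.exp (-β * eaH Λ (J ω) (Function.update (h ω) i 0) σ) := by
      rw [hB']
      exact Finset.sum_congr rfl fun σ _ => by rw [hEA ω σ]
    rw [site_identity Λ β (J ω) (h ω) i hi, hg]
    simp only
    rw [hAeq, hBeq, mul_assoc]
  -- measure-theoretic computation
  set ν1 := Measure.map (fun ω => h ω i) μ with hν1
  set ν2 := Measure.map R μ with hν2
  haveI pm1 : IsProbabilityMeasure ν1 := Measure.isProbabilityMeasure_map (hdis.meash i).aemeasurable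
  haveI pm2 : IsProbabilityMeasure ν2 := Measure.isProbabilityMeasure_map hRmeas.aemeasurable
  have hmap : Measure.map (fun ω => (h ω i, R ω)) μ = ν1.prod ν2 :=
    (indepFun_iff_map_prod_eq_prod_map_map (hdis.meash i).aemeasurable
      hRmeas.aemeasurable).mp hIndep
  have hInt : Integrable g (ν1.prod ν2) := by
    refine Integrable.mono' (integrable_const 1) hgmeas.aestronglyMeasurable ?_
    filter_upwards with z
    rw [hg]
    simp only
    rw [Real.norm_of_nonneg (loQ_nonneg _)]
    exact loQ_le_one _
  have hstep1 : ∫ ω, (1 - eaGibbs Λ β (J ω) (h ω) (fun σ => spinVal (σ ⟨i, hi⟩)) ^ 2) ∂μ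
      = ∫ z, g z ∂(ν1.prod ν2) := by
    rw [← hmap]
    rw [integral_map ((hdis.meash i).prodMk hRmeas).aemeasurable hgmeas.aestronglyMeasurable]
    exact integral_congr_ae (Filter.Eventually.of_forall hpoint)
  rw [hstep1, integral_prod_symm g hInt]
  have hlaw : ν1 = gaussianReal 0 ⟨Γ ^ 2, sq_nonneg Γ⟩ := hdis.lawh i
  have hinner : ∀ v : ({x // x ∈ T} → ℝ), ∫ x, g (x, v) ∂ν1 ≤ 2 / (Real.sqrt (2 * π) * Γ * β) := by
    intro v
    rw [hlaw, hg]
    simp only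
    exact loQ_gauss_bound Γ β (Real.log (A' v / B' v)) hΓ hβ
  calc ∫ v, ∫ x, g (x, v) ∂ν1 ∂ν2
      ≤ ∫ _, 2 / (Real.sqrt (2 * π) * Γ * β) ∂ν2 := by
        apply integral_mono hInt.integral_prod_right (integrable_const _) hinner
    _ = 2 / (Real.sqrt (2 * π) * Γ * β) := by
        rw [integral_const, probReal_univ, one_smul]

/-- **Site local order at arbitrary distance.**
For every finite box `Λ ⊂ ℤ^d`, every `β > 0` and every `Γ > 0`, the quenched state of the
Edwards-Anderson Hamiltonian with random field satisfies, for all sites `m, n ∈ Λ`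
(independently of their distance),
`E[ω(σ_m σ_n)²] ≥ 1 - (2/Γ)√(2/π)(1/β) - (1/(√(2π)Γ³))(1/β³)`. -/
theorem site_local_order
    {d : ℕ} (Λ : Finset (Site d))
    {Ω : Type*} [MeasurableSpace Ω] (μ : Measure Ω)
    (J : Ω → Site d × Site d → ℝ) (h : Ω → Site d → ℝ)
    (Δ Γ : ℝ) (hΓ : 0 < Γ)
    (hdis : IsEADisorder μ J h Δ Γ)
    (β : ℝ) (hβ : 0 < β)
    (m n : Site d) (hm : m ∈ Λ) (hn : n ∈ Λ) :
    ∫ ω, (eaGibbs Λ β (J ω) (h ω)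
        (fun σ => spinVal (σ ⟨m, hm⟩) * spinVal (σ ⟨n, hn⟩))) ^ 2 ∂μ ≥
      1 - (2 / Γ) * Real.sqrt (2 / π) * (1 / β)
        - (1 / (Real.sqrt (2 * π) * Γ ^ 3)) * (1 / β ^ 3) := by
  haveI : IsProbabilityMeasure μ := hdis.isProb
  have hint : ∀ f : (Λ → Bool) → ℝ, (∀ σ, f σ = 1 ∨ f σ = -1) →
      Integrable (fun ω => eaGibbs Λ β (J ω) (h ω) f ^ 2) μ := by
    intro f hf
    refine Integrable.mono' (integrable_const 1)
      ((measurable_eaGibbs Λ β hdis.measJ hdis.meash f).pow_const 2).aestronglyMeasurable ?_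
    filter_upwards with ω
    rw [Real.norm_of_nonneg (sq_nonneg _), ← sq_abs]
    have h1 := abs_eaGibbs_le_one Λ β (J ω) (h ω) f hf
    nlinarith [abs_nonneg (eaGibbs Λ β (J ω) (h ω) f)]
  have hum : ∀ σ : Λ → Bool, spinVal (σ ⟨m, hm⟩) = 1 ∨ spinVal (σ ⟨m, hm⟩) = -1 :=
    fun σ => spinVal_cases _
  have hun : ∀ σ : Λ → Bool, spinVal (σ ⟨n, hn⟩) = 1 ∨ spinVal (σ ⟨n, hn⟩) = -1 :=
    fun σ => spinVal_cases _
  have humn : ∀ σ : Λ → Bool, spinVal (σ ⟨m, hm⟩) * spinVal (σ ⟨n, hn⟩) = 1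
      ∨ spinVal (σ ⟨m, hm⟩) * spinVal (σ ⟨n, hn⟩) = -1 := by
    intro σ
    rcases hum σ with h1 | h1 <;> rcases hun σ with h2 | h2 <;> rw [h1, h2] <;> norm_num
  have hIm := hint _ hum
  have hIn := hint _ hun
  have hImn := hint _ humn
  have hIsum : Integrable (fun ω => eaGibbs Λ β (J ω) (h ω) (fun σ => spinVal (σ ⟨m, hm⟩)) ^ 2
      + eaGibbs Λ β (J ω) (h ω) (fun σ => spinVal (σ ⟨n, hn⟩)) ^ 2) μ := hIm.add hIn
  have hIsum1 : Integrable (fun ω => eaGibbs Λ β (J ω) (h ω) (fun σ => spinVal (σ ⟨m, hm⟩)) ^ 2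
      + eaGibbs Λ β (J ω) (h ω) (fun σ => spinVal (σ ⟨n, hn⟩)) ^ 2 - 1) μ :=
    hIsum.sub (integrable_const 1)
  have hpair : ∀ ω, eaGibbs Λ β (J ω) (h ω) (fun σ => spinVal (σ ⟨m, hm⟩)) ^ 2
      + eaGibbs Λ β (J ω) (h ω) (fun σ => spinVal (σ ⟨n, hn⟩)) ^ 2
      ≤ 1 + eaGibbs Λ β (J ω) (h ω)
          (fun σ => spinVal (σ ⟨m, hm⟩) * spinVal (σ ⟨n, hn⟩)) ^ 2 :=
    fun ω => gibbs_pair Λ β (J ω) (h ω) _ _ hum hun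
  have hmono : ∫ ω, (eaGibbs Λ β (J ω) (h ω) (fun σ => spinVal (σ ⟨m, hm⟩)) ^ 2
        + eaGibbs Λ β (J ω) (h ω) (fun σ => spinVal (σ ⟨n, hn⟩)) ^ 2 - 1) ∂μ
      ≤ ∫ ω, eaGibbs Λ β (J ω) (h ω)
          (fun σ => spinVal (σ ⟨m, hm⟩) * spinVal (σ ⟨n, hn⟩)) ^ 2 ∂μ := by
    apply integral_mono hIsum1 hImn
    intro ω
    have := hpair ω
    simp only [Pi.add_apply, Pi.sub_apply]
    linarith
  have hsplit : ∫ ω, (eaGibbs Λ β (J ω) (h ω) (fun σ => spinVal (σ ⟨m, hm⟩)) ^ 2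
        + eaGibbs Λ β (J ω) (h ω) (fun σ => spinVal (σ ⟨n, hn⟩)) ^ 2 - 1) ∂μ
      = (∫ ω, eaGibbs Λ β (J ω) (h ω) (fun σ => spinVal (σ ⟨m, hm⟩)) ^ 2 ∂μ)
        + (∫ ω, eaGibbs Λ β (J ω) (h ω) (fun σ => spinVal (σ ⟨n, hn⟩)) ^ 2 ∂μ) - 1 := by
    rw [integral_sub hIsum (integrable_const 1), integral_add hIm hIn,
      integral_const, probReal_univ, one_smul]
  have hM := site_integral_bound Λ μ J h Δ Γ hΓ hdis β hβ m hm
  have hN := site_integral_bound Λ μ J h Δ Γ hΓ hdis β hβ n hn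
  have hMs : ∫ ω, (1 - eaGibbs Λ β (J ω) (h ω) (fun σ => spinVal (σ ⟨m, hm⟩)) ^ 2) ∂μ
      = 1 - ∫ ω, eaGibbs Λ β (J ω) (h ω) (fun σ => spinVal (σ ⟨m, hm⟩)) ^ 2 ∂μ := by
    rw [integral_sub (integrable_const 1) hIm, integral_const, probReal_univ,
      one_smul]
  have hNs : ∫ ω, (1 - eaGibbs Λ β (J ω) (h ω) (fun σ => spinVal (σ ⟨n, hn⟩)) ^ 2) ∂μ
      = 1 - ∫ ω, eaGibbs Λ β (J ω) (h ω) (fun σ => spinVal (σ ⟨n, hn⟩)) ^ 2 ∂μ := by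
    rw [integral_sub (integrable_const 1) hIn, integral_const, probReal_univ,
      one_smul]
  rw [hMs] at hM
  rw [hNs] at hN
  have h2π : (0:ℝ) < Real.sqrt (2 * π) := Real.sqrt_pos.mpr (by positivity)
  have hs : Real.sqrt (2 / π) * Real.sqrt (2 * π) = 2 := by
    rw [← Real.sqrt_mul (by positivity),
      show (2 / π) * (2 * π) = 4 by field_simp; ring,
      show (4:ℝ) = 2 ^ 2 by norm_num, Real.sqrt_sq (by norm_num)]
  have hKval : (2 / Γ) * Real.sqrt (2 / π) * (1 / β)
      = 2 * (2 / (Real.sqrt (2 * π) * Γ * β)) := by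
    have hsq : Real.sqrt (2 / π) = 2 / Real.sqrt (2 * π) := by
      rw [eq_div_iff h2π.ne', hs]
    rw [hsq]
    field_simp
  have hcub : 0 ≤ (1 / (Real.sqrt (2 * π) * Γ ^ 3)) * (1 / β ^ 3) := by positivity
  rw [ge_iff_le, hKval]
  linarith

end
end

section
/- For any two subsets A, B ⊆ Λ with Ξ_A > 0 and Ξ_B > 0, and any β > 0, E[ω_A² ω_B²] ≥ 1 − (1/Ξ_A + 1/Ξ_B)·√(2/π)·(1/β). -/
open MeasureTheory ProbabilityTheory Real
open scoped NNReal BigOperators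

noncomputable section

variable {ι : Type*} [Fintype ι] [DecidableEq ι]

/-- `σ_A = ∏_{i ∈ A} σ_i`, the product of the spins in the set `A`. -/
def sigmaSet (A : Finset ι) (σ : ι → Bool) : ℝ := ∏ i ∈ A, spinVal (σ i)

/-- The general Gaussian spin-glass Hamiltonian `H(σ) = -∑_{A ⊆ Λ} J_A σ_A` on the
finite set of sites `ι` (the couplings `J` are indexed by all subsets of `ι`). -/
def glassH (J : Finset ι → ℝ) (σ : ι → Bool) : ℝ := -∑ A : Finset ι, J A * sigmaSet A σ

/-- The Boltzmann-Gibbs expectation `ω(f)` at inverse temperature `β` for the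
couplings `J`. -/
def gibbs (β : ℝ) (J : Finset ι → ℝ) (f : (ι → Bool) → ℝ) : ℝ :=
  (∑ σ : ι → Bool, f σ * Real.exp (-β * glassH J σ)) /
    (∑ σ : ι → Bool, Real.exp (-β * glassH J σ))

/-- `ω_A = ω(σ_A)`, the Gibbs expectation of `σ_A`. -/
def omegaSet (β : ℝ) (J : Finset ι → ℝ) (A : Finset ι) : ℝ := gibbs β J (sigmaSet A)

/-- The hypothesis that the couplings `J : Ω → Finset ι → ℝ` form an independent family of
centered Gaussian random variables with variances `E[J_A²] = Ξ_A²`. -/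
structure IsGaussianCouplings {Ω : Type*} [MeasurableSpace Ω] (μ : Measure Ω)
    (J : Ω → Finset ι → ℝ) (Ξ : Finset ι → ℝ≥0) : Prop where
  isProb : IsProbabilityMeasure μ
  meas : ∀ A : Finset ι, Measurable fun ω => J ω A
  law : ∀ A : Finset ι, Measure.map (fun ω => J ω A) μ = gaussianReal 0 (Ξ A ^ 2)
  indep : iIndepFun (fun A ω => J ω A) μ


open Filter
open scoped ENNReal Topology

set_option linter.unusedSectionVars false
set_option linter.unusedVariables false

lemma abs_spinVal (b : Bool) : |spinVal b| = 1 := by cases b <;> simp [spinVal]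

lemma abs_sigmaSet (A : Finset ι) (σ : ι → Bool) : |sigmaSet A σ| = 1 := by
  rw [sigmaSet, Finset.abs_prod]
  simp [abs_spinVal]

lemma sigmaSet_sq (A : Finset ι) (σ : ι → Bool) : sigmaSet A σ ^ 2 = 1 := by
  rw [← sq_abs, abs_sigmaSet, one_pow]

lemma denom_pos (β : ℝ) (J : Finset ι → ℝ) :
    0 < ∑ σ : ι → Bool, Real.exp (-β * glassH J σ) :=
  Finset.sum_pos (fun σ _ => Real.exp_pos _) Finset.univ_nonempty

lemma abs_omegaSet_le_one (β : ℝ) (J : Finset ι → ℝ) (A : Finset ι) :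
    |omegaSet β J A| ≤ 1 := by
  rw [omegaSet, gibbs, abs_div, abs_of_pos (denom_pos β J),
    div_le_one (denom_pos β J)]
  calc |∑ σ : ι → Bool, sigmaSet A σ * Real.exp (-β * glassH J σ)|
      ≤ ∑ σ : ι → Bool, |sigmaSet A σ * Real.exp (-β * glassH J σ)| :=
        Finset.abs_sum_le_sum_abs _ _
    _ = ∑ σ : ι → Bool, Real.exp (-β * glassH J σ) := by
        refine Finset.sum_congr rfl fun σ _ => ?_
        rw [abs_mul, abs_sigmaSet, one_mul, abs_of_pos (Real.exp_pos _)]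

lemma omegaSet_sq_le_one (β : ℝ) (J : Finset ι → ℝ) (A : Finset ι) :
    omegaSet β J A ^ 2 ≤ 1 := by
  have h := abs_omegaSet_le_one β J A
  nlinarith [abs_nonneg (omegaSet β J A), sq_abs (omegaSet β J A)]

lemma continuous_omegaSet (β : ℝ) (A : Finset ι) :
    Continuous fun J : Finset ι → ℝ => omegaSet β J A := by
  have hc : ∀ σ : ι → Bool,
      Continuous fun J : Finset ι → ℝ => Real.exp (-β * glassH J σ) := by
    intro σ
    refine Real.continuous_exp.comp (continuous_const.mul ?_)
    exact (continuous_finset_sum _ fun B _ => (continuous_apply B).mul continuous_const).neg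
  refine Continuous.div ?_ ?_ fun J => (denom_pos β J).ne'
  · exact continuous_finset_sum _ fun σ _ => continuous_const.mul (hc σ)
  · exact continuous_finset_sum _ fun σ _ => hc σ

lemma hasDerivAt_omega_update (β : ℝ) (c : Finset ι → ℝ) (A : Finset ι) (g : ℝ) :
    HasDerivAt (fun g => omegaSet β (Function.update c A g) A)
      (β * (1 - omegaSet β (Function.update c A g) A ^ 2)) g := by
  classical
  set R : (ι → Bool) → ℝ := fun σ => ∑ B ∈ Finset.univ.erase A, c B * sigmaSet B σ with hR
  have hkey : ∀ (g : ℝ) (σ : ι → Bool),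
      -β * glassH (Function.update c A g) σ = β * (g * sigmaSet A σ + R σ) := by
    intro g σ
    have hsum : ∑ B : Finset ι, Function.update c A g B * sigmaSet B σ
        = g * sigmaSet A σ + R σ := by
      rw [← Finset.add_sum_erase _ _ (Finset.mem_univ A)]
      congr 1
      · simp
      · refine Finset.sum_congr rfl fun B hB => ?_
        rw [Function.update_of_ne (Finset.ne_of_mem_erase hB)]
    rw [glassH, hsum]; ring
  set N : ℝ → ℝ := fun g => ∑ σ : ι → Bool,
    sigmaSet A σ * Real.exp (β * (g * sigmaSet A σ + R σ)) with hN
  set D : ℝ → ℝ := fun g => ∑ σ : ι → Bool,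
    Real.exp (β * (g * sigmaSet A σ + R σ)) with hD
  have hEq : ∀ g, omegaSet β (Function.update c A g) A = N g / D g := by
    intro g
    rw [omegaSet, gibbs]
    congr 1 <;> exact Finset.sum_congr rfl fun σ _ => by rw [hkey]
  have hDpos : ∀ g, 0 < D g :=
    fun g => Finset.sum_pos (fun σ _ => Real.exp_pos _) Finset.univ_nonempty
  have hterm : ∀ (σ : ι → Bool),
      HasDerivAt (fun g => Real.exp (β * (g * sigmaSet A σ + R σ)))
        (β * sigmaSet A σ * Real.exp (β * (g * sigmaSet A σ + R σ))) g := by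
    intro σ
    have h1 : HasDerivAt (fun g : ℝ => β * (g * sigmaSet A σ + R σ)) (β * sigmaSet A σ) g := by
      simpa using (((hasDerivAt_id g).mul_const (sigmaSet A σ)).add_const (R σ)).const_mul β
    simpa [mul_comm] using h1.exp
  have hDeriv_D : HasDerivAt D (β * N g) g := by
    have := HasDerivAt.fun_sum (fun σ (_ : σ ∈ Finset.univ) => hterm σ)
    refine this.congr_deriv (Eq.symm ?_)
    rw [hN, Finset.mul_sum]
    exact Finset.sum_congr rfl fun σ _ => by ring
  have hDeriv_N : HasDerivAt N (β * D g) g := by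
    have := HasDerivAt.fun_sum (fun σ (_ : σ ∈ Finset.univ) =>
      (hterm σ).const_mul (sigmaSet A σ))
    refine this.congr_deriv (Eq.symm ?_)
    rw [hD, Finset.mul_sum]
    refine Finset.sum_congr rfl fun σ _ => ?_
    have hsq := sigmaSet_sq A σ
    linear_combination (-(β * Real.exp (β * (g * sigmaSet A σ + R σ)))) * hsq
  have hdiv := hDeriv_N.div hDeriv_D (hDpos g).ne'
  have : HasDerivAt (fun g => omegaSet β (Function.update c A g) A)
      ((β * D g * D g - N g * (β * N g)) / D g ^ 2) g := by
    refine HasDerivAt.congr_of_eventuallyEq hdiv ?_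
    filter_upwards with x using (hEq x)
  convert this using 1
  rw [hEq g]
  have hD := (hDpos g).ne'
  rw [eq_div_iff (pow_ne_zero 2 hD), div_pow, mul_sub, mul_one, sub_mul, mul_assoc β (N g ^ 2 / D g ^ 2),
    div_mul_cancel₀ _ (pow_ne_zero 2 hD)]
  ring
lemma gaussian_one_sub_sq_le {f : ℝ → ℝ} {β : ℝ} (hβ : 0 < β)
    (hf : ∀ x, HasDerivAt f (β * (1 - f x ^ 2)) x) (hb : ∀ x, |f x| ≤ 1)
    {Ξ : ℝ≥0} (hΞ : 0 < Ξ) :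
    ∫ x, (1 - f x ^ 2) ∂(gaussianReal 0 (Ξ ^ 2)) ≤ Real.sqrt (2 / π) / (Ξ * β) := by
  have hΞR : (0:ℝ) < (Ξ:ℝ) := hΞ
  have hv : (Ξ ^ 2 : ℝ≥0) ≠ 0 := by positivity
  set φ : ℝ → ℝ := gaussianPDFReal 0 (Ξ ^ 2) with hφ
  set M : ℝ := (Real.sqrt (2 * π * ((Ξ:ℝ) ^ 2)))⁻¹ with hM
  have hMpos : 0 < M := by
    rw [hM]
    have : (0:ℝ) < 2 * π * ((Ξ:ℝ)^2) := by positivity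
    positivity
  have hφ_nonneg : ∀ x, 0 ≤ φ x := gaussianPDFReal_nonneg 0 (Ξ^2)
  have hφ_le : ∀ x, φ x ≤ M := by
    intro x
    rw [hφ, gaussianPDFReal]
    have h1 : Real.exp (-(x - 0)^2 / (2 * ((Ξ^2 : ℝ≥0) : ℝ))) ≤ 1 := by
      apply Real.exp_le_one_iff.mpr
      have : (0:ℝ) < 2 * ((Ξ^2 : ℝ≥0):ℝ) := by positivity
      apply div_nonpos_of_nonpos_of_nonneg <;> nlinarith [sq_nonneg (x - 0)]
    calc (√(2 * π * ((Ξ^2 : ℝ≥0):ℝ)))⁻¹ * Real.exp (-(x - 0)^2 / (2 * ((Ξ^2:ℝ≥0):ℝ)))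
        ≤ (√(2 * π * ((Ξ^2 : ℝ≥0):ℝ)))⁻¹ * 1 := by
          apply mul_le_mul_of_nonneg_left h1
          positivity
      _ = M := by rw [mul_one, hM]; norm_num
  have hcontf : Continuous f := by
    have : Differentiable ℝ f := fun x => (hf x).differentiableAt
    exact this.continuous
  have hφcont : Continuous φ := by
    rw [hφ, gaussianPDFReal_def]
    continuity
  have hsq_le : ∀ x, f x ^ 2 ≤ 1 := by
    intro x
    nlinarith [hb x, abs_nonneg (f x), sq_abs (f x)]
  -- rewrite the Gaussian integral as a Lebesgue integral against the density
  have hrw : ∫ x, (1 - f x ^ 2) ∂(gaussianReal 0 (Ξ ^ 2))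
      = ∫ x, φ x * (1 - f x ^ 2) := by
    rw [gaussianReal_of_var_ne_zero _ hv]
    have heq : volume.withDensity (gaussianPDF 0 (Ξ^2))
        = volume.withDensity (fun x => (((φ x).toNNReal : ℝ≥0) : ℝ≥0∞)) := rfl
    rw [heq, integral_withDensity_eq_integral_smul
      ((measurable_gaussianPDFReal 0 (Ξ^2)).real_toNNReal)]
    refine integral_congr_ae (ae_of_all _ fun x => ?_)
    simp only [NNReal.smul_def, Real.coe_toNNReal _ (hφ_nonneg x), hφ, smul_eq_mul,
      Real.coe_toNNReal _ (gaussianPDFReal_nonneg 0 (Ξ^2) x)]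
  set g : ℝ → ℝ := fun x => φ x * (1 - f x ^ 2) with hg
  have hgint : Integrable g := by
    refine Integrable.mono' (integrable_gaussianPDFReal 0 (Ξ^2))
      ((hφcont.mul ((continuous_const.sub (hcontf.pow 2)))).aestronglyMeasurable)
      (ae_of_all _ fun x => ?_)
    simp only [hg, Real.norm_eq_abs, abs_mul, abs_of_nonneg (hφ_nonneg x)]
    have h1 : |1 - f x ^ 2| ≤ 1 := by
      rw [abs_of_nonneg (by nlinarith [hsq_le x])]
      nlinarith [sq_nonneg (f x)]
    calc φ x * |1 - f x ^ 2| ≤ φ x * 1 := mul_le_mul_of_nonneg_left h1 (hφ_nonneg x)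
      _ = φ x := mul_one _
  -- interval bound
  have hIb : ∀ n : ℕ, ∫ x in (-(n:ℝ))..(n:ℝ), g x ≤ 2 * M / β := by
    intro n
    have hab : (-(n:ℝ)) ≤ (n:ℝ) := by
      have : (0:ℝ) ≤ n := n.cast_nonneg
      linarith
    have hint1 : IntervalIntegrable g volume (-(n:ℝ)) n :=
      (hφcont.mul ((continuous_const.sub (hcontf.pow 2)))).intervalIntegrable _ _
    have hcont' : Continuous fun x => β * (1 - f x ^ 2) :=
      continuous_const.mul (continuous_const.sub (hcontf.pow 2))
    have hint2 : IntervalIntegrable (fun x => (M / β) * (β * (1 - f x ^ 2)))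
        volume (-(n:ℝ)) n := (continuous_const.mul hcont').intervalIntegrable _ _
    have hmono : ∫ x in (-(n:ℝ))..(n:ℝ), g x
        ≤ ∫ x in (-(n:ℝ))..(n:ℝ), (M / β) * (β * (1 - f x ^ 2)) := by
      refine intervalIntegral.integral_mono_on hab hint1 hint2 fun x _ => ?_
      have h2 : (M / β) * (β * (1 - f x ^ 2)) = M * (1 - f x ^ 2) := by
        field_simp
      rw [hg, h2]
      simp only
      exact mul_le_mul_of_nonneg_right (hφ_le x) (by nlinarith [hsq_le x])
    have hftc : ∫ x in (-(n:ℝ))..(n:ℝ), β * (1 - f x ^ 2) = f n - f (-(n:ℝ)) :=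
      intervalIntegral.integral_eq_sub_of_hasDerivAt (fun x _ => hf x)
        (hcont'.intervalIntegrable _ _)
    calc ∫ x in (-(n:ℝ))..(n:ℝ), g x
        ≤ ∫ x in (-(n:ℝ))..(n:ℝ), (M / β) * (β * (1 - f x ^ 2)) := hmono
      _ = (M / β) * (f n - f (-(n:ℝ))) := by
          rw [intervalIntegral.integral_const_mul, hftc]
      _ ≤ (M / β) * 2 := by
          apply mul_le_mul_of_nonneg_left _ (by positivity)
          have h1 := abs_le.mp (hb n)
          have h2 := abs_le.mp (hb (-(n:ℝ)))
          linarith [h1.2, h2.1]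
      _ = 2 * M / β := by ring
  -- take the limit
  have htend : Tendsto (fun n : ℕ => ∫ x in (-(n:ℝ))..(n:ℝ), g x) atTop
      (𝓝 (∫ x, g x)) :=
    intervalIntegral_tendsto_integral hgint
      (tendsto_neg_atTop_atBot.comp tendsto_natCast_atTop_atTop)
      tendsto_natCast_atTop_atTop
  have hle : ∫ x, g x ≤ 2 * M / β := le_of_tendsto htend (Eventually.of_forall hIb)
  -- identify the constant
  have hconst : 2 * M / β = Real.sqrt (2 / π) / (Ξ * β) := by
    rw [hM]
    have hπ : (0:ℝ) < π := Real.pi_pos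
    have h1 : Real.sqrt (2 * π * ((Ξ:ℝ)^2)) = Real.sqrt 2 * Real.sqrt π * Ξ := by
      rw [Real.sqrt_mul (by positivity), Real.sqrt_mul (by norm_num), Real.sqrt_sq hΞR.le]
    have h2 : Real.sqrt (2 / π) = Real.sqrt 2 / Real.sqrt π :=
      Real.sqrt_div (by norm_num) π
    have hs2 : Real.sqrt 2 ^ 2 = 2 := Real.sq_sqrt (by norm_num)
    have hsπ : (0:ℝ) < Real.sqrt π := Real.sqrt_pos.mpr hπ
    have hs2p : (0:ℝ) < Real.sqrt 2 := Real.sqrt_pos.mpr (by norm_num)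
    rw [h1, h2]
    field_simp
    linear_combination (-1:ℝ) * hs2
  rw [hrw, ← hconst]
  exact hle

lemma expectation_one_sub_sq_le {Ω : Type*} [MeasurableSpace Ω] (μ : Measure Ω)
    (J : Ω → Finset ι → ℝ) (Ξ : Finset ι → ℝ≥0) (hJ : IsGaussianCouplings μ J Ξ)
    (A : Finset ι) (hΞA : 0 < Ξ A) {β : ℝ} (hβ : 0 < β) :
    ∫ ω, (1 - omegaSet β (J ω) A ^ 2) ∂μ ≤ Real.sqrt (2 / π) / (Ξ A * β) := by
  classical
  haveI := hJ.isProb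
  set T : Finset (Finset ι) := Finset.univ.erase A with hT
  set rest : Ω → (↥T → ℝ) := fun ω i => J ω ↑i with hrest
  have hrest_meas : Measurable rest := measurable_pi_lambda _ fun i => hJ.meas _
  have hJA_meas : Measurable fun ω => J ω A := hJ.meas A
  have hdisj : Disjoint ({A} : Finset (Finset ι)) T := by
    simp [hT, Finset.disjoint_left]
  have hindep0 := hJ.indep.indepFun_finset {A} T hdisj hJ.meas
  have hindep : IndepFun (fun ω => J ω A) rest μ := by
    have hφm : Measurable fun u : (↥({A} : Finset (Finset ι)) → ℝ) =>
        u ⟨A, Finset.mem_singleton_self A⟩ := measurable_pi_apply _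
    exact hindep0.comp hφm measurable_id
  set γ := gaussianReal 0 (Ξ A ^ 2) with hγ
  set ρ := μ.map rest with hρ
  haveI : IsProbabilityMeasure ρ := Measure.isProbabilityMeasure_map hrest_meas.aemeasurable
  have hmap : μ.map (fun ω => (J ω A, rest ω)) = γ.prod ρ := by
    rw [(indepFun_iff_map_prod_eq_prod_map_map hJA_meas.aemeasurable
      hrest_meas.aemeasurable).mp hindep, hJ.law A]
  set patch : ℝ × (↥T → ℝ) → (Finset ι → ℝ) :=
    fun p C => if h : C ∈ T then p.2 ⟨C, h⟩ else p.1 with hpatch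
  have hpatch_meas : Measurable patch := by
    refine measurable_pi_lambda _ fun C => ?_
    by_cases h : C ∈ T
    · simp only [hpatch, dif_pos h]
      exact (measurable_pi_apply _).comp measurable_snd
    · simp only [hpatch, dif_neg h]
      exact measurable_fst
  have hpatchJ : ∀ ω, patch (J ω A, rest ω) = J ω := by
    intro ω; funext C
    by_cases h : C ∈ T
    · simp [hpatch, dif_pos h, hrest]
    · have hCA : C = A := by
        by_contra hne
        exact h (Finset.mem_erase.mpr ⟨hne, Finset.mem_univ C⟩)
      simp [hpatch, dif_neg h, hCA, hT]
  set phi : ℝ × (↥T → ℝ) → ℝ := fun p => 1 - omegaSet β (patch p) A ^ 2 with hphi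
  have hphi_meas : Measurable phi :=
    measurable_const.sub
      ((((continuous_omegaSet β A).measurable).comp hpatch_meas).pow_const 2)
  have hphi_int : Integrable phi (γ.prod ρ) := by
    refine Integrable.mono' (integrable_const 1) hphi_meas.aestronglyMeasurable
      (ae_of_all _ fun p => ?_)
    have h1 := omegaSet_sq_le_one β (patch p) A
    have h2 := sq_nonneg (omegaSet β (patch p) A)
    rw [Real.norm_eq_abs, hphi]
    simp only
    rw [abs_of_nonneg (by linarith)]
    linarith
  have h1 : ∫ ω, (1 - omegaSet β (J ω) A ^ 2) ∂μ = ∫ p, phi p ∂(γ.prod ρ) := by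
    rw [← hmap, integral_map ((hJA_meas.prodMk hrest_meas).aemeasurable)
      hphi_meas.aestronglyMeasurable]
    refine integral_congr_ae (ae_of_all _ fun ω => ?_)
    simp only [hphi, hpatchJ ω]
  rw [h1, integral_prod_symm _ hphi_int]
  have hinner : ∀ y : ↥T → ℝ, ∫ x, phi (x, y) ∂γ ≤ Real.sqrt (2 / π) / (Ξ A * β) := by
    intro y
    set c : Finset ι → ℝ := patch (0, y) with hc
    have hup : ∀ g : ℝ, patch (g, y) = Function.update c A g := by
      intro g; funext C
      by_cases h : C ∈ T
      · have hne : C ≠ A := (Finset.mem_erase.mp h).1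
        simp [hpatch, dif_pos h, hc, Function.update_of_ne hne]
      · have hCA : C = A := by
          by_contra hne
          exact h (Finset.mem_erase.mpr ⟨hne, Finset.mem_univ C⟩)
        subst hCA
        simp [hpatch, dif_neg h, Function.update_self]
    have heq : ∀ x, phi (x, y) = 1 - (omegaSet β (Function.update c A x) A) ^ 2 := by
      intro x
      rw [hphi]
      simp only
      rw [hup x]
    calc ∫ x, phi (x, y) ∂γ
        = ∫ x, (1 - (omegaSet β (Function.update c A x) A) ^ 2) ∂γ :=
          integral_congr_ae (ae_of_all _ heq)
      _ ≤ _ := gaussian_one_sub_sq_le hβ (hasDerivAt_omega_update β c A)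
            (fun x => abs_omegaSet_le_one β _ A) hΞA
  calc ∫ y, ∫ x, phi (x, y) ∂γ ∂ρ
      ≤ ∫ _y, (Real.sqrt (2 / π) / ((Ξ A : ℝ) * β)) ∂ρ :=
        integral_mono hphi_int.integral_prod_right (integrable_const _) hinner
    _ = Real.sqrt (2 / π) / ((Ξ A : ℝ) * β) := by simp

/-- For any two subsets `A, B ⊆ Λ` with `Ξ_A > 0`, `Ξ_B > 0`, and any `β > 0`,
`E[ω_A² ω_B²] ≥ 1 - (1/Ξ_A + 1/Ξ_B) √(2/π) (1/β)`. -/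
theorem product_second_moment_explicit_bound
    {Ω : Type*} [MeasurableSpace Ω] (μ : Measure Ω)
    (J : Ω → Finset ι → ℝ) (Ξ : Finset ι → ℝ≥0)
    (hJ : IsGaussianCouplings μ J Ξ)
    (A B : Finset ι) (hΞA : 0 < Ξ A) (hΞB : 0 < Ξ B) (β : ℝ) (hβ : 0 < β) :
    ∫ ω, (omegaSet β (J ω) A) ^ 2 * (omegaSet β (J ω) B) ^ 2 ∂μ ≥
      1 - (1 / (Ξ A : ℝ) + 1 / (Ξ B : ℝ)) * Real.sqrt (2 / π) * (1 / β) := by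
  classical
  haveI := hJ.isProb
  have hJmeas : Measurable fun ω => J ω := measurable_pi_lambda _ fun C => hJ.meas C
  have mA : Measurable fun ω => omegaSet β (J ω) A :=
    (continuous_omegaSet β A).measurable.comp hJmeas
  have mB : Measurable fun ω => omegaSet β (J ω) B :=
    (continuous_omegaSet β B).measurable.comp hJmeas
  have hintAB : Integrable (fun ω => (omegaSet β (J ω) A) ^ 2 * (omegaSet β (J ω) B) ^ 2) μ := by
    refine Integrable.mono' (integrable_const 1)
      (((mA.pow_const 2).mul (mB.pow_const 2)).aestronglyMeasurable)
      (ae_of_all _ fun ω => ?_)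
    have h1 := omegaSet_sq_le_one β (J ω) A
    have h2 := omegaSet_sq_le_one β (J ω) B
    have h3 := sq_nonneg (omegaSet β (J ω) A)
    have h4 := sq_nonneg (omegaSet β (J ω) B)
    rw [Real.norm_eq_abs, abs_of_nonneg (by positivity)]
    nlinarith
  have hintA : Integrable (fun ω => 1 - omegaSet β (J ω) A ^ 2) μ := by
    refine Integrable.mono' (integrable_const 1)
      ((measurable_const.sub (mA.pow_const 2)).aestronglyMeasurable)
      (ae_of_all _ fun ω => ?_)
    have h1 := omegaSet_sq_le_one β (J ω) A
    have h3 := sq_nonneg (omegaSet β (J ω) A)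
    rw [Real.norm_eq_abs, abs_of_nonneg (by linarith)]
    linarith
  have hintB : Integrable (fun ω => 1 - omegaSet β (J ω) B ^ 2) μ := by
    refine Integrable.mono' (integrable_const 1)
      ((measurable_const.sub (mB.pow_const 2)).aestronglyMeasurable)
      (ae_of_all _ fun ω => ?_)
    have h1 := omegaSet_sq_le_one β (J ω) B
    have h3 := sq_nonneg (omegaSet β (J ω) B)
    rw [Real.norm_eq_abs, abs_of_nonneg (by linarith)]
    linarith
  have key : ∀ ω, (1:ℝ) - (1 - omegaSet β (J ω) A ^ 2) - (1 - omegaSet β (J ω) B ^ 2)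
      ≤ (omegaSet β (J ω) A) ^ 2 * (omegaSet β (J ω) B) ^ 2 := by
    intro ω
    have h1 := omegaSet_sq_le_one β (J ω) A
    have h2 := omegaSet_sq_le_one β (J ω) B
    have h3 := sq_nonneg (omegaSet β (J ω) A)
    have h4 := sq_nonneg (omegaSet β (J ω) B)
    nlinarith
  have h2 : ∫ ω, ((1:ℝ) - (1 - omegaSet β (J ω) A ^ 2) - (1 - omegaSet β (J ω) B ^ 2)) ∂μ
      ≤ ∫ ω, (omegaSet β (J ω) A) ^ 2 * (omegaSet β (J ω) B) ^ 2 ∂μ :=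
    integral_mono ((integrable_const 1).sub hintA |>.sub hintB) hintAB key
  have h3 : ∫ ω, ((1:ℝ) - (1 - omegaSet β (J ω) A ^ 2) - (1 - omegaSet β (J ω) B ^ 2)) ∂μ
      = 1 - (∫ ω, (1 - omegaSet β (J ω) A ^ 2) ∂μ) - (∫ ω, (1 - omegaSet β (J ω) B ^ 2) ∂μ) := by
    have hint1 : Integrable (fun ω => (1:ℝ) - (1 - omegaSet β (J ω) A ^ 2)) μ :=
      (integrable_const 1).sub hintA
    rw [integral_sub hint1 hintB, integral_sub (integrable_const 1) hintA]
    simp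
  have hA := expectation_one_sub_sq_le μ J Ξ hJ A hΞA hβ
  have hB := expectation_one_sub_sq_le μ J Ξ hJ B hΞB hβ
  have hΞAR : (0:ℝ) < (Ξ A : ℝ) := hΞA
  have hΞBR : (0:ℝ) < (Ξ B : ℝ) := hΞB
  have hconstid : (1 / (Ξ A : ℝ) + 1 / (Ξ B : ℝ)) * Real.sqrt (2 / π) * (1 / β)
      = Real.sqrt (2 / π) / ((Ξ A : ℝ) * β) + Real.sqrt (2 / π) / ((Ξ B : ℝ) * β) := by
    field_simp
  rw [ge_iff_le, hconstid]
  linarith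

end
end
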